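/- arXiv:math/0301280 — 5 statements merged into one kernel-verified Lean document; each statement's English description precedes it below -/
import Mathlib

section
/- The Lusztig reparametrization map R in type A2 restricts to a bijection from ℤ³_{≥0} (triples of nonnegative integers) onto itself. -/
/-- Lusztig's type A2 reparametrization map, on integer triples. -/
def Rz (m : ℤ × ℤ × ℤ) : ℤ × ℤ × ℤ :=
  (m.2.1 + m.2.2 - min m.1 m.2.2, min m.1 m.2.2, m.1 + m.2.1 - min m.1 m.2.2)

/-- The nonnegative orthant in ℤ³. -/
def nonnegTriples : Set (ℤ × ℤ × ℤ) :=
  {m | 0 ≤ m.1 ∧ 0 ≤ m.2.1 ∧ 0 ≤ m.2.2}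

lemma Rz_invol (m : ℤ × ℤ × ℤ) : Rz (Rz m) = m := by
  obtain ⟨a, b, c⟩ := m
  simp only [Rz]
  rcases le_total a c with h | h <;>
    simp_all [min_def] <;> split <;> omega

lemma Rz_mapsTo : Set.MapsTo Rz nonnegTriples nonnegTriples := by
  rintro ⟨a, b, c⟩ ⟨h1, h2, h3⟩
  refine ⟨?_, ?_, ?_⟩ <;> simp only [Rz] <;> simp at h1 h2 h3 ⊢ <;> omega

theorem R_bijOn_nonneg : Set.BijOn Rz nonnegTriples nonnegTriples := by
  exact ⟨Rz_mapsTo, fun x _ y _ h => by rw [← Rz_invol x, h, Rz_invol],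
    fun y hy => ⟨Rz y, Rz_mapsTo hy, Rz_invol y⟩⟩
end

section
/- Let C be a convex set in a real vector space and let F be a face of C (an extreme subset: F is convex, and whenever x, y ∈ C and the open segment between x and y meets F, then x, y ∈ F). Then C ∩ affineSpan(F) = F; in particular, any point of C lying in the affine span of the face F already lies in F. -/
theorem convex_inter_affineSpan_face {V : Type*} [AddCommGroup V] [Module ℝ V]
    (C F : Set V) (hC : Convex ℝ C) (hFC : F ⊆ C) (hF : Convex ℝ F)
    (hface : ∀ x ∈ C, ∀ y ∈ C, (openSegment ℝ x y ∩ F).Nonempty → x ∈ F ∧ y ∈ F) :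
    C ∩ (affineSpan ℝ F : Set V) = F := by
  classical
  refine Set.Subset.antisymm ?_ (fun x hx => ⟨hFC hx, subset_affineSpan ℝ F hx⟩)
  rintro p ⟨hpC, hpA⟩
  rw [← Subtype.range_coe (s := F)] at hpA
  obtain ⟨s, w, hw, hp⟩ := eq_affineCombination_of_mem_affineSpan hpA
  rw [Finset.affineCombination_eq_linear_combination _ _ _ hw] at hp
  set sP := s.filter (fun i => 0 < w i) with hsP
  set sN := s.filter (fun i => w i < 0) with hsN
  set a := ∑ i ∈ sP, w i with ha
  set b := ∑ i ∈ sN, -w i with hb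
  have hsub : sN ⊆ s.filter (fun i => ¬ 0 < w i) := by
    intro i hi
    rw [hsN, Finset.mem_filter] at hi
    exact Finset.mem_filter.2 ⟨hi.1, by linarith [hi.2]⟩
  have hzero : ∀ i ∈ s.filter (fun i => ¬ 0 < w i), i ∉ sN → w i = 0 := by
    intro i hi hni
    rw [Finset.mem_filter] at hi
    by_contra h
    exact hni (Finset.mem_filter.2 ⟨hi.1, lt_of_le_of_ne (not_lt.1 hi.2) h⟩)
  have hneg_sum : ∑ i ∈ s.filter (fun i => ¬ 0 < w i), w i = -b := by
    rw [← Finset.sum_subset hsub hzero]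
    simp [hb]
  have hab : a - b = 1 := by
    rw [← hw, ← Finset.sum_filter_add_sum_filter_not s (fun i => 0 < w i) w, hneg_sum, ← ha]
    ring
  have hb0 : 0 ≤ b := Finset.sum_nonneg fun i hi => by
    rw [hsN, Finset.mem_filter] at hi; linarith [hi.2]
  have ha1 : (1:ℝ) ≤ a := by linarith
  have ha0 : a ≠ 0 := by linarith
  have hp' : p + (∑ i ∈ sN, (-w i) • (i:V)) = ∑ i ∈ sP, w i • (i:V) := by
    have h2 : ∑ i ∈ s.filter (fun i => ¬ 0 < w i), w i • (i:V) = ∑ i ∈ sN, w i • (i:V) :=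
      (Finset.sum_subset hsub fun i hi hni => by rw [hzero i hi hni, zero_smul]).symm
    rw [hp, ← Finset.sum_filter_add_sum_filter_not s (fun i => 0 < w i) (fun i => w i • (i:V)),
      h2]
    have h3 : ∑ i ∈ sN, (w i • (i:V) + (-w i) • (i:V)) = 0 :=
      Finset.sum_eq_zero fun i _ => by rw [← add_smul]; simp
    rw [add_assoc, ← Finset.sum_add_distrib, h3, add_zero]
  set q := ∑ i ∈ sP, (w i / a) • (i:V) with hq
  have hqF : q ∈ F := by
    apply hF.sum_mem
    · intro i hi
      rw [hsP, Finset.mem_filter] at hi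
      exact div_nonneg hi.2.le (by linarith)
    · rw [← Finset.sum_div, ← ha, div_self ha0]
    · exact fun i _ => i.2
  have haq : a • q = ∑ i ∈ sP, w i • (i:V) := by
    rw [hq, Finset.smul_sum]
    refine Finset.sum_congr rfl fun i _ => ?_
    rw [smul_smul, mul_div_cancel₀ _ ha0]
  rcases eq_or_lt_of_le hb0 with hbe | hbp
  · -- b = 0 : the negative part vanishes and a = 1
    have hsNe : ∀ i ∈ sN, -w i = 0 :=
      (Finset.sum_eq_zero_iff_of_nonneg (fun j hj => by
        rw [hsN, Finset.mem_filter] at hj; linarith [hj.2])).1 hbe.symm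
    have hz : (∑ i ∈ sN, (-w i) • (i:V)) = 0 :=
      Finset.sum_eq_zero fun i hi => by rw [hsNe i hi, zero_smul]
    have hpq : p = a • q := by rw [haq, ← hp', hz, add_zero]
    have ha1' : a = 1 := by linarith
    rw [hpq, ha1', one_smul]
    exact hqF
  · -- b > 0
    set r := ∑ i ∈ sN, (-w i / b) • (i:V) with hr
    have hrF : r ∈ F := by
      apply hF.sum_mem
      · intro i hi
        rw [hsN, Finset.mem_filter] at hi
        exact div_nonneg (by linarith [hi.2]) hb0
      · rw [← Finset.sum_div, ← hb, div_self (by linarith)]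
      · exact fun i _ => i.2
    have hbr : b • r = ∑ i ∈ sN, (-w i) • (i:V) := by
      rw [hr, Finset.smul_sum]
      refine Finset.sum_congr rfl fun i _ => ?_
      rw [smul_smul, mul_div_cancel₀ _ (by linarith : b ≠ 0)]
    have hAQ : a • q = p + b • r := by rw [haq, hbr]; exact hp'.symm
    have key : q = (1/a) • p + (b/a) • r := by
      have h := congrArg (fun v : V => (1/a) • v) hAQ
      simp only [smul_add, smul_smul] at h
      rw [one_div_mul_cancel ha0, one_smul, one_div_mul_eq_div] at h
      exact h
    have hqseg : q ∈ openSegment ℝ p r :=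
      ⟨1/a, b/a, by positivity, by positivity, by field_simp; linarith, key.symm⟩
    exact (hface p hpC r (hFC hrF) ⟨q, hqseg, hqF⟩).1
end

section
/- With D as defined (using g_i(m) = 2m1+m2-m3, g_j(m) = -m1+m2+2m3, and D(m,m') = (m1·m2' + m2·m3' - m1·m3') - (m1'·m2 + m2'·m3 - m1'·m3) - [m1'·g_i(m) + m2'·(g_i(m)+g_j(m)) + m3'·g_j(m)] + [m1·g_i(m') + m2·(g_i(m')+g_j(m')) + m3·g_j(m')]) and R Lusztig's type A2 reparametrization map: if m1 ≥ m3 and m1' ≤ m3', then D(R(m), R(m')) - D(m, m') = 2·(m1 - m3)·(m3' - m1'). -/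
/-- Lusztig's type A2 reparametrization map. -/
noncomputable def R (m : ℝ × ℝ × ℝ) : ℝ × ℝ × ℝ :=
  (m.2.1 + m.2.2 - min m.1 m.2.2, min m.1 m.2.2, m.1 + m.2.1 - min m.1 m.2.2)

/-- Pairing of the weight encoded by `m` with the simple root `α_i`. -/
def gi (m : ℝ × ℝ × ℝ) : ℝ := 2 * m.1 + m.2.1 - m.2.2

/-- Pairing of the weight encoded by `m` with the simple root `α_j`. -/
def gj (m : ℝ × ℝ × ℝ) : ℝ := -m.1 + m.2.1 + 2 * m.2.2

/-- The difference of `q`-commutation exponents in the two PBW parametrizations. -/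
def D (m m' : ℝ × ℝ × ℝ) : ℝ :=
  (m.1 * m'.2.1 + m.2.1 * m'.2.2 - m.1 * m'.2.2)
  - (m'.1 * m.2.1 + m'.2.1 * m.2.2 - m'.1 * m.2.2)
  - (m'.1 * gi m + m'.2.1 * (gi m + gj m) + m'.2.2 * gj m)
  + (m.1 * gi m' + m.2.1 * (gi m' + gj m') + m.2.2 * gj m')

theorem D_difference_opposite_sides (m m' : ℝ × ℝ × ℝ)
    (h : m.2.2 ≤ m.1) (h' : m'.1 ≤ m'.2.2) :
    D (R m) (R m') - D m m' = 2 * (m.1 - m.2.2) * (m'.2.2 - m'.1) := by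
  simp only [D, R, gi, gj, min_eq_right h, min_eq_left h']
  ring
end

section
/- With D and R as defined, if m, m' ∈ ℝ³ satisfy m1 > m3 and m1' < m3', then D(R(m), R(m')) ≠ D(m, m'). Consequently, two points strictly separated by the wall {x1 = x3} cannot both yield the same q-commutation exponent in the two PBW parametrizations, which is the contradiction underlying the theorem that q-commuting dual canonical basis elements lie in a single PBW linearity domain. -/
theorem D_ne_of_strictly_separated (m m' : ℝ × ℝ × ℝ)
    (h : m.2.2 < m.1) (h' : m'.1 < m'.2.2) :
    D (R m) (R m') ≠ D m m' := by
  have hm : min m.1 m.2.2 = m.2.2 := min_eq_right h.le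
  have hm' : min m'.1 m'.2.2 = m'.1 := min_eq_left h'.le
  simp only [D, R, gi, gj, hm, hm']
  intro heq
  nlinarith [mul_pos (sub_pos.2 h) (sub_pos.2 h'), sq_nonneg (m.1 - m.2.2), sq_nonneg (m'.2.2 - m'.1)]
end

section
/- Let f: ℝ³ → ℝ³ be Lusztig's type A2 reparametrization map R. Suppose m_1, ..., m_k ∈ ℝ³_{≥0} are such that R is additive on every partial sum (R(m_1 + ... + m_s) = R(m_1) + ... + R(m_s) for all 1 ≤ s ≤ k), and q ∈ ℝ³_{≥0} satisfies R((m_1+...+m_k) + q) = R(m_1+...+m_k) + R(q). Then R(m_1 + ... + m_k + q) = R(m_1) + ... + R(m_k) + R(q), and moreover R(m_i + q) = R(m_i) + R(q) for each i. -/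
/-- Membership in the nonnegative orthant of ℝ³. -/
def Nonneg3 (m : ℝ × ℝ × ℝ) : Prop := 0 ≤ m.1 ∧ 0 ≤ m.2.1 ∧ 0 ≤ m.2.2

lemma min_add_eq_iff (x y u v : ℝ) :
    min (x+u) (y+v) = min x y + min u v ↔ (x ≤ y ∧ u ≤ v) ∨ (y ≤ x ∧ v ≤ u) := by
  rcases le_total x y with h | h <;> rcases le_total u v with h' | h' <;>
    rcases le_total (x+u) (y+v) with h'' | h'' <;>
    simp only [min_eq_left, min_eq_right, h, h', h''] <;>
    constructor <;> intro H <;>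
      first
        | tauto
        | (rcases H with ⟨H1,H2⟩|⟨H1,H2⟩ <;> linarith)
        | (left; refine ⟨?_, ?_⟩ <;> first | trivial | linarith)
        | (right; refine ⟨?_, ?_⟩ <;> first | trivial | linarith)

lemma radd_iff (a b : ℝ × ℝ × ℝ) :
    R (a+b) = R a + R b ↔ ((a.1 ≤ a.2.2 ∧ b.1 ≤ b.2.2) ∨ (a.2.2 ≤ a.1 ∧ b.2.2 ≤ b.1)) := by
  rw [← min_add_eq_iff]
  simp only [R, Prod.ext_iff, Prod.fst_add, Prod.snd_add]
  constructor
  · rintro ⟨h1, h2, h3⟩; linarith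
  · intro h; exact ⟨by linarith, by linarith, by linarith⟩

lemma chain_neg (k : ℕ) (dS dm : ℕ → ℝ)
    (hstep : ∀ s < k, dS (s+1) = dS s + dm s)
    (hside : ∀ s < k, (dS s ≤ 0 ∧ dm s ≤ 0) ∨ (0 ≤ dS s ∧ 0 ≤ dm s))
    (j : ℕ) (hj : j < k) (hneg : dm j < 0) : dS k < 0 := by
  have key : ∀ s, j < s → s ≤ k → dS s < 0 := by
    intro s
    induction s with
    | zero => omega
    | succ n ih =>
      intro h1 h2
      rcases Nat.lt_or_ge j n with h | h
      · have hn := ih h (by omega)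
        have hst := hstep n (by omega)
        rcases hside n (by omega) with ⟨_, h4⟩ | ⟨h3, _⟩
        · linarith
        · linarith
      · have hje : j = n := by omega
        subst hje
        have hst := hstep j (by omega)
        rcases hside j (by omega) with ⟨h3, _⟩ | ⟨_, h4⟩
        · linarith
        · linarith
  exact key k hj le_rfl

theorem same_domain (k : ℕ) (m : Fin k → ℝ × ℝ × ℝ) (q : ℝ × ℝ × ℝ)
    (hm : ∀ i, Nonneg3 (m i)) (hq : Nonneg3 q)
    (hpartial : ∀ s : ℕ, 1 ≤ s → s ≤ k →
      R (∑ i ∈ Finset.univ.filter (fun i : Fin k => (i : ℕ) < s), m i) =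
        ∑ i ∈ Finset.univ.filter (fun i : Fin k => (i : ℕ) < s), R (m i))
    (hsum : R ((∑ i, m i) + q) = R (∑ i, m i) + R q) :
    R ((∑ i, m i) + q) = (∑ i, R (m i)) + R q ∧
      ∀ i, R (m i + q) = R (m i) + R q := by
  set S : ℕ → ℝ × ℝ × ℝ :=
    fun s => ∑ i ∈ Finset.univ.filter (fun i : Fin k => (i : ℕ) < s), m i with hSdef
  set M : ℕ → ℝ × ℝ × ℝ := fun s => if h : s < k then m ⟨s, h⟩ else 0 with hMdef
  have hMval : ∀ (s : ℕ) (h : s < k), M s = m ⟨s, h⟩ := fun s h => dif_pos h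
  -- filter at s+1 is insert
  have filter_succ : ∀ (s : ℕ) (hs : s < k),
      Finset.univ.filter (fun i : Fin k => (i : ℕ) < s + 1) =
        insert ⟨s, hs⟩ (Finset.univ.filter (fun i : Fin k => (i : ℕ) < s)) := by
    intro s hs
    ext i
    simp only [Finset.mem_filter, Finset.mem_univ, true_and, Finset.mem_insert, Fin.ext_iff]
    omega
  have hnotmem : ∀ (s : ℕ) (hs : s < k),
      (⟨s, hs⟩ : Fin k) ∉ Finset.univ.filter (fun i : Fin k => (i : ℕ) < s) := by
    intro s hs
    simp
  have Sstep : ∀ (s : ℕ) (hs : s < k), S (s+1) = S s + M s := by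
    intro s hs
    rw [hSdef]
    simp only
    rw [filter_succ s hs, Finset.sum_insert (hnotmem s hs), hMval s hs]
    exact add_comm _ _
  have Sk : S k = ∑ i, m i := by
    rw [hSdef]
    simp only
    rw [Finset.filter_true_of_mem (fun i _ => i.isLt)]
  have hRzero : R 0 = 0 := by
    simp [R, Prod.ext_iff]
  have hR : ∀ s, s ≤ k →
      R (S s) = ∑ i ∈ Finset.univ.filter (fun i : Fin k => (i : ℕ) < s), R (m i) := by
    intro s hs
    rcases Nat.eq_zero_or_pos s with rfl | h
    · have : Finset.univ.filter (fun i : Fin k => (i : ℕ) < 0) = ∅ := by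
        ext i; simp
      rw [hSdef]
      simp only
      rw [this]
      simpa using hRzero
    · exact hpartial s h hs
  have hpair : ∀ (s : ℕ) (hs : s < k), R (S s + M s) = R (S s) + R (M s) := by
    intro s hs
    have e1 : R (S (s+1)) = ∑ i ∈ Finset.univ.filter (fun i : Fin k => (i : ℕ) < s + 1), R (m i) :=
      hR (s+1) (by omega)
    rw [← Sstep s hs, e1, filter_succ s hs, Finset.sum_insert (hnotmem s hs),
      hR s (by omega), hMval s hs]
    exact add_comm _ _
  have side : ∀ (s : ℕ) (hs : s < k),
      ((S s).1 ≤ (S s).2.2 ∧ (M s).1 ≤ (M s).2.2) ∨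
        ((S s).2.2 ≤ (S s).1 ∧ (M s).2.2 ≤ (M s).1) :=
    fun s hs => (radd_iff _ _).1 (hpair s hs)
  have sideq : ((S k).1 ≤ (S k).2.2 ∧ q.1 ≤ q.2.2) ∨
      ((S k).2.2 ≤ (S k).1 ∧ q.2.2 ≤ q.1) := by
    apply (radd_iff _ _).1
    rw [Sk]
    exact hsum
  have dstep : ∀ s < k, (S (s+1)).1 - (S (s+1)).2.2 = ((S s).1 - (S s).2.2) + ((M s).1 - (M s).2.2) := by
    intro s hs
    rw [Sstep s hs]
    simp [Prod.fst_add, Prod.snd_add]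
    ring
  constructor
  · rw [hsum, ← Sk, hR k le_rfl, Finset.filter_true_of_mem (fun i _ => i.isLt)]
  · intro i
    rw [radd_iff]
    rcases lt_trichotomy q.1 q.2.2 with hq1 | hq1 | hq1
    · -- q strictly on the left side: all m i must satisfy m.1 ≤ m.2.2
      left
      refine ⟨?_, le_of_lt hq1⟩
      by_contra hcon
      push_neg at hcon
      have hk : (S k).2.2 - (S k).1 < 0 := by
        apply chain_neg k (fun s => (S s).2.2 - (S s).1) (fun s => (M s).2.2 - (M s).1)
        · intro s hs
          have := dstep s hs
          linarith
        · intro s hs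
          rcases side s hs with ⟨h1, h2⟩ | ⟨h1, h2⟩
          · right; constructor <;> linarith
          · left; constructor <;> linarith
        · exact i.isLt
        · rw [hMval i i.isLt]
          simp only [Fin.eta]
          linarith
      rcases sideq with ⟨h1, _⟩ | ⟨_, h2⟩
      · linarith
      · linarith
    · -- q on the wall
      rcases le_total (m i).1 (m i).2.2 with h | h
      · exact Or.inl ⟨h, le_of_eq hq1⟩
      · exact Or.inr ⟨h, ge_of_eq hq1⟩
    · -- q strictly on the right side: all m i must satisfy m.2.2 ≤ m.1
      right
      refine ⟨?_, le_of_lt hq1⟩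
      by_contra hcon
      push_neg at hcon
      have hk : (S k).1 - (S k).2.2 < 0 := by
        apply chain_neg k (fun s => (S s).1 - (S s).2.2) (fun s => (M s).1 - (M s).2.2)
        · intro s hs
          exact dstep s hs
        · intro s hs
          rcases side s hs with ⟨h1, h2⟩ | ⟨h1, h2⟩
          · left; constructor <;> linarith
          · right; constructor <;> linarith
        · exact i.isLt
        · rw [hMval i i.isLt]
          simp only [Fin.eta]
          linarith
      rcases sideq with ⟨h1, _⟩ | ⟨_, h2⟩
      · linarith
      · linarith
end
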